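/- arXiv:1805.01691 — 2 statements merged into one kernel-verified Lean document; each statement's English description precedes it below -/
import Mathlib

section
/- Let λ, μ > 0 and T > 0. There exists a constant c > 0 depending only on λ, μ and T such that for every positive integer n, Σ_{i=0}^{n-1} Σ_{j=0}^{n-1} Σ_{k=0}^{n-1} ∫∫ |u_i(x,z) u_j(x,z) u_k(x,z)| dν_n(x,z) ≤ c n. -/
open MeasureTheory

/-- The trapeze `C_t = {(x,z) : 0 ≤ x ≤ t, z ≥ t - x}` (inside `[0,∞)²`). -/
def Ctrap (t : ℝ) : Set (ℝ × ℝ) := {p | 0 ≤ p.1 ∧ p.1 ≤ t ∧ t - p.1 ≤ p.2}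

/-- Indicator of `C_t`. -/
noncomputable def indC (t : ℝ) (p : ℝ × ℝ) : ℝ :=
  Set.indicator (Ctrap t) (fun _ => (1 : ℝ)) p

/-- `u_i(x,z) = (1/√T)(1_{C_{(i+1)T/n}} - 1_{C_{iT/n}} + μ ∫_{iT/n}^{(i+1)T/n} 1_{C_u} du)(x,z)`. -/
noncomputable def uSharp (T μ : ℝ) (n i : ℕ) (p : ℝ × ℝ) : ℝ :=
  (1 / Real.sqrt T) *
    (indC (((i : ℝ) + 1) * T / n) p - indC ((i : ℝ) * T / n) p +
      μ * ∫ u in ((i : ℝ) * T / n)..(((i : ℝ) + 1) * T / n), indC u p)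

/-!
For fixed `(x, z)`, `t ↦ 1_{C_t}(x, z)` is the indicator of the interval `[x, x + z]` (empty if
`x < 0`). Along the grid `t_i = iT/n` it therefore jumps at most twice, while the integral terms of
the `u_i` telescope to at most `μT`; hence `∑ᵢ |u_i| ≤ (2 + μT)/√T` pointwise, uniformly in `n`.
The triple sum of `|u_i u_j u_k|` is the cube of `∑ᵢ |u_i|`, and it vanishes for `x > T`, so it is
dominated by `(2 + μT)³ T^{-3/2} 1_{x ≤ T}`, whose `ν_n`-integral is `λ n T (2 + μT)³ T^{-3/2}`.
-/

open Set Finset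

section IndicatorIcc

variable {c d : ℝ}

lemma abs_indicator_Icc_sub_le {a b : ℝ} (hab : a ≤ b) :
    |(Icc c d).indicator (1 : ℝ → ℝ) b - (Icc c d).indicator 1 a|
      ≤ (Ioc a b).indicator 1 c + (Ico a b).indicator 1 d := by
  simp only [indicator_apply, Set.mem_Icc, Set.mem_Ioc, Set.mem_Ico, Pi.one_apply]
  split_ifs <;> norm_num <;> grind

lemma sum_indicator_pairwiseDisjoint_le_one {ι α : Type*} (s : Finset ι) {t : ι → Set α}
    (ht : (s : Set ι).PairwiseDisjoint t) (x : α) :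
    ∑ i ∈ s, (t i).indicator (1 : α → ℝ) x ≤ 1 := by
  rw [← Finset.indicator_biUnion_apply s t ht]
  exact indicator_le_self' (fun _ _ => zero_le_one) x

lemma sum_abs_indicator_Icc_sub_le_two {a : ℕ → ℝ} (ha : Monotone a) (n : ℕ) :
    ∑ i ∈ range n, |(Icc c d).indicator (1 : ℝ → ℝ) (a (i + 1)) - (Icc c d).indicator 1 (a i)|
      ≤ 2 := by
  calc _ ≤ ∑ i ∈ range n, ((Ioc (a i) (a (i + 1))).indicator 1 c
          + (Ico (a i) (a (i + 1))).indicator 1 d) :=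
        sum_le_sum fun i _ => abs_indicator_Icc_sub_le (ha i.le_succ)
    _ ≤ 1 + 1 := by
        rw [sum_add_distrib]
        gcongr
        · exact sum_indicator_pairwiseDisjoint_le_one _
            (ha.pairwise_disjoint_on_Ioc_succ.set_pairwise _) c
        · exact sum_indicator_pairwiseDisjoint_le_one _
            (ha.pairwise_disjoint_on_Ico_succ.set_pairwise _) d
    _ = 2 := one_add_one_eq_two

lemma intervalIntegrable_indicator_Icc (a b : ℝ) :
    IntervalIntegrable ((Icc c d).indicator (1 : ℝ → ℝ)) volume a b :=
  ⟨Integrable.indicator (integrableOn_const measure_Ioc_lt_top.ne) measurableSet_Icc,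
    Integrable.indicator (integrableOn_const measure_Ioc_lt_top.ne) measurableSet_Icc⟩

lemma sum_abs_indicator_Icc_sub_add_integral_le {a : ℕ → ℝ} (ha : Monotone a) {μ : ℝ}
    (hμ : 0 ≤ μ) (n : ℕ) :
    ∑ i ∈ range n, |(Icc c d).indicator (1 : ℝ → ℝ) (a (i + 1)) - (Icc c d).indicator 1 (a i)
        + μ * ∫ t in a i..a (i + 1), (Icc c d).indicator 1 t| ≤ 2 + μ * (a n - a 0) := by
  set f : ℝ → ℝ := (Icc c d).indicator 1
  have hf0 : ∀ t, 0 ≤ f t := fun t => indicator_nonneg (fun _ _ => zero_le_one) t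
  have hf1 : ∀ t, f t ≤ 1 := fun t => indicator_le_self' (fun _ _ => zero_le_one) t
  have hmass : ∫ t in a 0..a n, f t ≤ a n - a 0 := by
    simpa using intervalIntegral.integral_mono_on (ha n.zero_le)
      (intervalIntegrable_indicator_Icc _ _) intervalIntegrable_const fun t _ => hf1 t
  calc _ ≤ ∑ i ∈ range n, (|f (a (i + 1)) - f (a i)| + μ * ∫ t in a i..a (i + 1), f t) := by
        refine sum_le_sum fun i _ => (abs_add_le _ _).trans_eq ?_
        rw [abs_of_nonneg (mul_nonneg hμ
          (intervalIntegral.integral_nonneg (ha i.le_succ) fun t _ => hf0 t))]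
    _ = ∑ i ∈ range n, |f (a (i + 1)) - f (a i)| + μ * ∫ t in a 0..a n, f t := by
        rw [sum_add_distrib, ← mul_sum, intervalIntegral.sum_integral_adjacent_intervals
          fun i _ => intervalIntegrable_indicator_Icc _ _]
    _ ≤ 2 + μ * (a n - a 0) := by
        gcongr
        exact sum_abs_indicator_Icc_sub_le_two ha n

end IndicatorIcc

lemma Measurable.intervalIntegral_prod_right {α : Type*} [MeasurableSpace α] {f : α × ℝ → ℝ}
    (hf : Measurable f) (a b : ℝ) : Measurable fun x => ∫ t in a..b, f (x, t) :=
  (hf.stronglyMeasurable.integral_prod_right' (ν := volume.restrict (Ioc a b))).measurable.sub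
    (hf.stronglyMeasurable.integral_prod_right' (ν := volume.restrict (Ioc b a))).measurable

lemma exists_indC_eq_indicator_Icc (p : ℝ × ℝ) :
    ∃ c d : ℝ, ∀ t, indC t p = (Icc c d).indicator 1 t := by
  refine if hx : 0 ≤ p.1 then ⟨p.1, p.1 + p.2, fun t => ?_⟩ else ⟨1, 0, fun t => ?_⟩ <;>
    simp only [indC, Ctrap, indicator_apply, mem_ofPred_eq, Set.mem_Icc, Pi.one_apply] <;> grind

lemma indC_eq_zero_of_lt {t : ℝ} {p : ℝ × ℝ} (h : t < p.1) : indC t p = 0 :=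
  indicator_of_notMem (fun hp => h.not_ge hp.2.1) _

lemma measurable_indC_uncurry : Measurable fun q : (ℝ × ℝ) × ℝ => indC q.2 q.1 := by
  have hS : MeasurableSet {q : (ℝ × ℝ) × ℝ | 0 ≤ q.1.1 ∧ q.1.1 ≤ q.2 ∧ q.2 - q.1.1 ≤ q.1.2} :=
    measurableSet_setOfPred.mpr (by fun_prop)
  exact measurable_const.indicator hS

section FiniteSums

variable {ι α : Type*} [MeasurableSpace α] {ρ : Measure α} {s : Finset ι} {f : ι → α → ℝ}
  {g : α → ℝ}

lemma integrable_of_sum_le (hf : ∀ i ∈ s, AEStronglyMeasurable (f i) ρ)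
    (hf0 : ∀ i ∈ s, ∀ x, 0 ≤ f i x) (hfg : ∀ x, ∑ i ∈ s, f i x ≤ g x) (hg : Integrable g ρ)
    {i : ι} (hi : i ∈ s) : Integrable (f i) ρ :=
  hg.mono' (hf i hi) <| ae_of_all _ fun x => by
    rw [Real.norm_of_nonneg (hf0 i hi x)]
    exact (single_le_sum (fun j hj => hf0 j hj x) hi).trans (hfg x)

lemma sum_integral_le_of_sum_le (hf : ∀ i ∈ s, AEStronglyMeasurable (f i) ρ)
    (hf0 : ∀ i ∈ s, ∀ x, 0 ≤ f i x) (hfg : ∀ x, ∑ i ∈ s, f i x ≤ g x) (hg : Integrable g ρ) :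
    ∑ i ∈ s, ∫ x, f i x ∂ρ ≤ ∫ x, g x ∂ρ := by
  have hint := fun i (hi : i ∈ s) => integrable_of_sum_le hf hf0 hfg hg hi
  rw [← integral_finsetSum s hint]
  exact integral_mono (integrable_finsetSum s hint) hg hfg

lemma sum_product_abs_mul_mul_eq_pow (f : ι → ℝ) :
    ∑ ijk ∈ s ×ˢ s ×ˢ s, |f ijk.1 * f ijk.2.1 * f ijk.2.2| = (∑ i ∈ s, |f i|) ^ 3 := by
  simp only [sum_product, abs_mul, ← mul_sum, ← sum_mul]
  ring

lemma sum_integral_integral_le_of_sum_le {β : Type*} [MeasurableSpace β] {ν : Measure β}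
    [SFinite ρ] [SFinite ν] {f : ι → α → β → ℝ} {g : α × β → ℝ}
    (hf : ∀ i ∈ s, AEStronglyMeasurable (fun p => f i p.1 p.2) (ρ.prod ν))
    (hf0 : ∀ i ∈ s, ∀ x y, 0 ≤ f i x y) (hfg : ∀ x y, ∑ i ∈ s, f i x y ≤ g (x, y))
    (hg : Integrable g (ρ.prod ν)) :
    ∑ i ∈ s, ∫ x, ∫ y, f i x y ∂ν ∂ρ ≤ ∫ p, g p ∂(ρ.prod ν) := by
  have hf0' : ∀ i ∈ s, ∀ p : α × β, 0 ≤ f i p.1 p.2 := fun i hi p => hf0 i hi p.1 p.2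
  have hfg' : ∀ p : α × β, ∑ i ∈ s, f i p.1 p.2 ≤ g p := fun p => hfg p.1 p.2
  calc _ = ∑ i ∈ s, ∫ p, f i p.1 p.2 ∂(ρ.prod ν) := sum_congr rfl fun i hi =>
        (integral_prod _ (integrable_of_sum_le hf hf0' hfg' hg hi)).symm
    _ ≤ _ := sum_integral_le_of_sum_le hf hf0' hfg' hg

end FiniteSums

section uSharp

lemma measurable_uSharp (T μ : ℝ) (n i : ℕ) : Measurable (uSharp T μ n i) := by
  have hC (t : ℝ) : Measurable (indC t) :=
    measurable_indC_uncurry.comp (measurable_id.prodMk measurable_const)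
  exact measurable_const.mul (((hC _).sub (hC _)).add
    ((Measurable.intervalIntegral_prod_right measurable_indC_uncurry _ _).const_mul μ))

variable {T μ : ℝ} {n : ℕ}

lemma uSharp_eq_zero_of_lt (hT : 0 ≤ T) {i : ℕ} (hi : i < n) {p : ℝ × ℝ} (hp : T < p.1) :
    uSharp T μ n i p = 0 := by
  have hn : (0 : ℝ) < n := by exact_mod_cast i.zero_le.trans_lt hi
  have hlo : (i : ℝ) * T / n ≤ ((i : ℝ) + 1) * T / n := by gcongr; linarith
  have hhi : ((i : ℝ) + 1) * T / n ≤ T := by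
    rw [div_le_iff₀ hn, mul_comm T]; gcongr; exact_mod_cast hi
  have hzero : ∀ t ≤ T, indC t p = 0 := fun t ht => indC_eq_zero_of_lt (ht.trans_lt hp)
  rw [uSharp, hzero _ hhi, hzero _ (hlo.trans hhi), intervalIntegral.integral_congr
    (g := fun _ => 0) fun t ht => hzero t ((uIcc_of_le hlo ▸ ht).2.trans hhi)]
  simp

lemma sum_abs_uSharp_le (hμ : 0 ≤ μ) (hT : 0 ≤ T) (hn : 0 < n) (p : ℝ × ℝ) :
    ∑ i ∈ range n, |uSharp T μ n i p| ≤ (2 + μ * T) / √T := by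
  obtain ⟨c, d, hcd⟩ := exists_indC_eq_indicator_Icc p
  set a : ℕ → ℝ := fun i => i * T / n with ha
  have ha_mono : Monotone a := fun i j hij => by simp only [ha]; gcongr
  have hu (i : ℕ) : uSharp T μ n i p = (√T)⁻¹ * ((Icc c d).indicator 1 (a (i + 1))
      - (Icc c d).indicator 1 (a i) + μ * ∫ t in a i..a (i + 1), (Icc c d).indicator 1 t) := by
    simp only [uSharp, hcd, ha]
    push_cast
    ring
  have hspan : a n - a 0 = T := by simp [ha, hn.ne']
  simp only [hu, abs_mul, abs_inv, abs_of_nonneg (Real.sqrt_nonneg T), ← mul_sum]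
  rw [div_eq_inv_mul, ← hspan]
  gcongr
  exact sum_abs_indicator_Icc_sub_add_integral_le ha_mono hμ n

lemma sum_abs_uSharp_mul_mul_le (hμ : 0 ≤ μ) (hT : 0 ≤ T) (hn : 0 < n) (p : ℝ × ℝ) :
    ∑ ijk ∈ range n ×ˢ range n ×ˢ range n,
        |uSharp T μ n ijk.1 p * uSharp T μ n ijk.2.1 p * uSharp T μ n ijk.2.2 p|
      ≤ (Iic T).indicator (fun _ => ((2 + μ * T) / √T) ^ 3) p.1 := by
  rw [sum_product_abs_mul_mul_eq_pow fun i => uSharp T μ n i p]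
  by_cases hp : p.1 ≤ T
  · rw [indicator_of_mem (Set.mem_Iic.mpr hp)]
    exact pow_le_pow_left₀ (sum_nonneg fun i _ => abs_nonneg _) (sum_abs_uSharp_le hμ hT hn p) 3
  · rw [indicator_of_notMem (Set.notMem_Iic.mpr (not_le.mp hp)), sum_eq_zero fun i hi => by
      rw [uSharp_eq_zero_of_lt hT (mem_range.mp hi) (not_le.mp hp), abs_zero]]
    norm_num

end uSharp

section Quadrant

variable {T μ : ℝ} (C D : ℝ)

lemma integral_Ici_zero_exp_neg_mul (hμ : 0 < μ) :
    ∫ z in Ici (0 : ℝ), Real.exp (-μ * z) = μ⁻¹ := by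
  rw [integral_Ici_eq_integral_Ioi, integral_exp_mul_Ioi (neg_lt_zero.mpr hμ)]
  simp

lemma integrable_indicator_Iic_mul_exp_neg (hμ : 0 < μ) :
    Integrable (fun p : ℝ × ℝ => (Iic T).indicator (fun _ => C) p.1 * (D * Real.exp (-μ * p.2)))
      ((volume.restrict (Ici (0 : ℝ))).prod (volume.restrict (Ici (0 : ℝ)))) := by
  refine Integrable.mul_prod (f := fun x => (Iic T).indicator (fun _ => C) x)
    (g := fun z => D * Real.exp (-μ * z)) ?_ ?_
  · refine (integrable_indicator_iff measurableSet_Iic).mpr (integrableOn_const ?_)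
    rw [Measure.restrict_apply measurableSet_Iic, Iic_inter_Ici]
    exact measure_Icc_lt_top.ne
  · exact ((integrableOn_Ici_iff_integrableOn_Ioi).mpr (exp_neg_integrableOn_Ioi 0 hμ)).const_mul D

lemma integral_indicator_Iic_mul_exp_neg (hT : 0 ≤ T) (hμ : 0 < μ) :
    ∫ p : ℝ × ℝ, (Iic T).indicator (fun _ => C) p.1 * (D * Real.exp (-μ * p.2))
      ∂((volume.restrict (Ici (0 : ℝ))).prod (volume.restrict (Ici (0 : ℝ)))) = C * T * D / μ := by
  rw [integral_prod_mul (fun x => (Iic T).indicator (fun _ => C) x)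
      fun z => D * Real.exp (-μ * z),
    integral_indicator measurableSet_Iic, Measure.restrict_restrict measurableSet_Iic,
    Iic_inter_Ici, setIntegral_const, Real.volume_real_Icc_of_le hT, integral_const_mul,
    integral_Ici_zero_exp_neg_mul hμ, sub_zero, smul_eq_mul]
  ring

end Quadrant

/-- Third-moment bound: `Σ_{i,j,k} ∫∫ |u_i u_j u_k| dν_n ≤ c n`, where
`dν_n(x,z) = λn dx ⊗ μ e^{-μz} dz` on `[0,∞)²`. -/
theorem stmt11 (lam mu T : ℝ) (hlam : 0 < lam) (hmu : 0 < mu) (hT : 0 < T) :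
    ∃ c > 0, ∀ n : ℕ, 0 < n →
      ∑ i ∈ Finset.range n, ∑ j ∈ Finset.range n, ∑ k ∈ Finset.range n,
        (∫ x in Set.Ici (0:ℝ), ∫ z in Set.Ici (0:ℝ),
          |uSharp T mu n i (x, z) * uSharp T mu n j (x, z) * uSharp T mu n k (x, z)|
            * (lam * n * mu * Real.exp (-mu * z)))
      ≤ c * n := by
  set K := (2 + mu * T) / √T
  refine ⟨K ^ 3 * lam * T, by positivity, fun n hn => ?_⟩
  have hw0 (z : ℝ) : 0 ≤ lam * n * mu * Real.exp (-mu * z) := by positivity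
  have hu := measurable_uSharp T mu n
  calc _ = ∑ ijk ∈ range n ×ˢ range n ×ˢ range n, ∫ x in Ici (0 : ℝ), ∫ z in Ici (0 : ℝ),
        |uSharp T mu n ijk.1 (x, z) * uSharp T mu n ijk.2.1 (x, z) * uSharp T mu n ijk.2.2 (x, z)|
          * (lam * n * mu * Real.exp (-mu * z)) := by
        simp only [sum_product]
    _ ≤ ∫ p, (Iic T).indicator (fun _ => K ^ 3) p.1 * (lam * n * mu * Real.exp (-mu * p.2))
          ∂((volume.restrict (Ici (0 : ℝ))).prod (volume.restrict (Ici (0 : ℝ)))) :=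
        sum_integral_integral_le_of_sum_le (fun _ _ => by fun_prop)
          (fun _ _ _ z => mul_nonneg (abs_nonneg _) (hw0 z))
          (fun x z => by
            rw [← sum_mul]
            exact mul_le_mul_of_nonneg_right
              (sum_abs_uSharp_mul_mul_le hmu.le hT.le hn (x, z)) (hw0 z))
          (integrable_indicator_Iic_mul_exp_neg _ _ hmu)
    _ = K ^ 3 * lam * T * n := by
        rw [integral_indicator_Iic_mul_exp_neg _ _ hT.le hmu]
        field_simp
end

section
/- Let λ, μ > 0, T > 0, n a positive integer, and 0 ≤ i ≤ n-1. Then ∫∫ u_i(x,z)² dν_n(x,z) = (n/T) ( γ((i+1)T/n) - γ(iT/n) ), where γ(t) = 2λt - (λ/μ)(1 - e^{-μt}). -/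
open MeasureTheory

/-- `γ(t) = 2λt - (λ/μ)(1 - e^{-μt})`. -/
noncomputable def gammaFun (lam mu t : ℝ) : ℝ :=
  2 * lam * t - (lam / mu) * (1 - Real.exp (-mu * t))

/-!
For `x ≥ 0`, `u ↦ 1_{C_u}(x, z)` is the indicator of `[x, x + z]`, so with `a = iT/n` and
`b = (i+1)T/n` the bracket in `u_i` is piecewise affine in `z`: it vanishes for `x > b`; for
`a < x ≤ b` it is `μz` below `b - x` and `1 + μ(b - x)` above; for `x ≤ a` it is `0` below `a - x`,
then `μ(z - (a - x)) - 1`, then `μ(b - a)` above `b - x`. Each profile is `0`, then affine of slope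
`μ`, then jumps up by `1`, and against the density `μe^{-μz}` its square integrates in closed form,
because `-((y + 1)² + 1)e^{-μz}` is a primitive of `y² μe^{-μz}` when `y' = μ`. This gives
`2 - e^{-μ(b-x)}` and `e^{-μ(a-x)} - e^{-μ(b-x)}` respectively, and integrating in `x` yields
`2(b - a) - (e^{-μa} - e^{-μb})/μ = (γ(b) - γ(a))/λ`.
-/

open Set Real

lemma indC_mk_of_nonneg {x : ℝ} (hx : 0 ≤ x) (z t : ℝ) :
    indC t (x, z) = (Icc x (x + z)).indicator 1 t := by
  by_cases h : t ∈ Icc x (x + z)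
  · rw [indicator_of_mem h, indC, indicator_of_mem]
    · rfl
    exact ⟨hx, h.1, by linarith [h.2]⟩
  · rw [indicator_of_notMem h, indC, indicator_of_notMem]
    exact fun hC => h ⟨hC.2.1, by linarith [hC.2.2]⟩

lemma integral_indC_mk {a b x : ℝ} (hab : a ≤ b) (hx : 0 ≤ x) (z : ℝ) :
    ∫ u in a..b, indC u (x, z) = max (min (x + z) b - max x a) 0 := by
  simp_rw [indC_mk_of_nonneg hx, intervalIntegral.integral_of_le hab,
    ← integral_Icc_eq_integral_Ioc, integral_indicator_one measurableSet_Icc,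
    measureReal_restrict_apply measurableSet_Icc, Icc_inter_Icc, Real.volume_real_Icc]

noncomputable def compensatedIncrement (μ a b : ℝ) (p : ℝ × ℝ) : ℝ :=
  indC b p - indC a p + μ * ∫ u in a..b, indC u p

lemma compensatedIncrement_mk {μ a b x : ℝ} (hab : a ≤ b) (hx : 0 ≤ x) (z : ℝ) :
    compensatedIncrement μ a b (x, z) =
      (if x ≤ b ∧ b ≤ x + z then 1 else 0) - (if x ≤ a ∧ a ≤ x + z then 1 else 0)
        + μ * max (min (x + z) b - max x a) 0 := by
  rw [compensatedIncrement, integral_indC_mk hab hx]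
  simp only [indC_mk_of_nonneg hx, indicator_apply, mem_Icc, Pi.one_apply]

section Splitting

variable {f g : ℝ → ℝ} {p q : ℝ}

lemma integrableOn_Ioi_of_eqOn_Ioo (hpq : p ≤ q) (h : EqOn f g (Ioo p q))
    (hg : IntervalIntegrable g volume p q) (hf : IntegrableOn f (Ioi q)) :
    IntegrableOn f (Ioi p) := by
  have hf' : IntervalIntegrable f volume p q := hg.congr_uIoo (uIoo_of_le hpq ▸ h.symm)
  rw [← Ioc_union_Ioi_eq_Ioi hpq]
  exact ((intervalIntegrable_iff_integrableOn_Ioc_of_le hpq).1 hf').union hf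

lemma integral_Ioi_eq_of_eqOn_Ioo (hpq : p ≤ q) (h : EqOn f g (Ioo p q))
    (hg : IntervalIntegrable g volume p q) (hf : IntegrableOn f (Ioi q)) :
    ∫ z in Ioi p, f z = (∫ z in p..q, g z) + ∫ z in Ioi q, f z := by
  rw [← intervalIntegral.integral_interval_add_Ioi' (hg.congr_uIoo (uIoo_of_le hpq ▸ h.symm)) hf,
    intervalIntegral.integral_congr_Ioo_of_le hpq h]

end Splitting

lemma integral_Ioi_const_mul_mul_exp_neg_mul {μ : ℝ} (hμ : 0 < μ) (K c : ℝ) :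
    ∫ z in Ioi c, K * (μ * exp (-μ * z)) = K * exp (-μ * c) := by
  rw [integral_const_mul, integral_const_mul, integral_exp_mul_Ioi (neg_lt_zero.2 hμ)]
  field_simp

lemma hasDerivAt_sq_affine_mul_exp_neg_mul (μ p d z : ℝ) :
    HasDerivAt (fun z => -((μ * (z - p) + d + 1) ^ 2 + 1) * exp (-μ * z))
      ((μ * (z - p) + d) ^ 2 * (μ * exp (-μ * z))) z := by
  have hlin : HasDerivAt (fun z => μ * (z - p) + d + 1) μ z := by
    simpa using (((hasDerivAt_id z).sub_const p).const_mul μ).add_const (d + 1)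
  have hexp : HasDerivAt (fun z => exp (-μ * z)) (exp (-μ * z) * -μ) z := by
    simpa using ((hasDerivAt_id z).const_mul (-μ)).exp
  exact (((hlin.pow 2).add_const 1).neg.mul hexp).congr_deriv (by
    simp only [Nat.cast_ofNat, Nat.add_one_sub_one, pow_one, Pi.pow_apply, Pi.neg_apply]
    ring)

lemma integral_Ici_sq_mul_exp_neg_mul_of_piecewise {μ p q d : ℝ} (hμ : 0 < μ) (hp : 0 ≤ p)
    (hpq : p ≤ q) {f : ℝ → ℝ} (h₀ : ∀ z ∈ Ioo 0 p, f z = 0)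
    (h₁ : ∀ z ∈ Ioo p q, f z = μ * (z - p) + d) (h₂ : ∀ z ∈ Ioi q, f z = μ * (q - p) + d + 1) :
    ∫ z in Ici 0, f z ^ 2 * (μ * exp (-μ * z))
      = ((d + 1) ^ 2 + 1) * exp (-μ * p) - exp (-μ * q) := by
  set F := fun z => f z ^ 2 * (μ * exp (-μ * z))
  have hF₀ : EqOn F 0 (Ioo 0 p) := fun z hz => by simp [F, h₀ z hz]
  have hF₁ : EqOn F (fun z => (μ * (z - p) + d) ^ 2 * (μ * exp (-μ * z))) (Ioo p q) :=
    fun z hz => by simp only [F, h₁ z hz]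
  have hF₂ : EqOn F (fun z => (μ * (q - p) + d + 1) ^ 2 * (μ * exp (-μ * z))) (Ioi q) :=
    fun z hz => by simp only [F, h₂ z hz]
  have hF₂_int : IntegrableOn F (Ioi q) := by
    refine (integrableOn_congr_fun hF₂ measurableSet_Ioi).2 ?_
    exact IntegrableOn.congr_fun
      ((exp_neg_integrableOn_Ioi q hμ).const_mul ((μ * (q - p) + d + 1) ^ 2 * μ))
      (fun z _ => by ring) measurableSet_Ioi
  have hg₁ : IntervalIntegrable (fun z => (μ * (z - p) + d) ^ 2 * (μ * exp (-μ * z))) volume p q :=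
    (by fun_prop : Continuous _).intervalIntegrable p q
  rw [integral_Ici_eq_integral_Ioi,
    integral_Ioi_eq_of_eqOn_Ioo hp hF₀ intervalIntegrable_const
      (integrableOn_Ioi_of_eqOn_Ioo hpq hF₁ hg₁ hF₂_int),
    integral_Ioi_eq_of_eqOn_Ioo hpq hF₁ hg₁ hF₂_int, setIntegral_congr_fun measurableSet_Ioi hF₂,
    integral_Ioi_const_mul_mul_exp_neg_mul hμ,
    intervalIntegral.integral_eq_sub_of_hasDerivAt
      (fun z _ => hasDerivAt_sq_affine_mul_exp_neg_mul μ p d z) hg₁]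
  simp only [Pi.zero_apply, intervalIntegral.integral_zero, sub_self, mul_zero, zero_add]
  ring

section CompensatedIncrement

variable {μ a b x : ℝ}

lemma integral_sq_compensatedIncrement_of_lt (hab : a ≤ b) (hx : 0 ≤ x) (hbx : b < x) :
    ∫ z in Ici 0, compensatedIncrement μ a b (x, z) ^ 2 * (μ * exp (-μ * z)) = 0 := by
  refine setIntegral_eq_zero_of_forall_eq_zero fun z _ => ?_
  have hzero : compensatedIncrement μ a b (x, z) = 0 := by
    rw [compensatedIncrement_mk hab hx]
    grind
  rw [hzero, zero_pow two_ne_zero, zero_mul]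

lemma integral_sq_compensatedIncrement_of_mem_Ioc (hμ : 0 < μ) (hx : 0 ≤ x) (hax : a < x)
    (hxb : x ≤ b) :
    ∫ z in Ici 0, compensatedIncrement μ a b (x, z) ^ 2 * (μ * exp (-μ * z))
      = 2 - exp (-μ * (b - x)) := by
  have hab : a ≤ b := hax.le.trans hxb
  have h := integral_Ici_sq_mul_exp_neg_mul_of_piecewise (d := 0) hμ le_rfl (sub_nonneg.2 hxb)
    (f := fun z => compensatedIncrement μ a b (x, z)) (fun z hz => absurd hz (by simp))
    (fun z hz => by rw [compensatedIncrement_mk hab hx]; grind)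
    (fun z hz => by rw [compensatedIncrement_mk hab hx]; grind)
  rw [h]
  norm_num

lemma integral_sq_compensatedIncrement_of_le (hμ : 0 < μ) (hab : a ≤ b) (hx : 0 ≤ x)
    (hxa : x ≤ a) :
    ∫ z in Ici 0, compensatedIncrement μ a b (x, z) ^ 2 * (μ * exp (-μ * z))
      = exp (-μ * (a - x)) - exp (-μ * (b - x)) := by
  have h := integral_Ici_sq_mul_exp_neg_mul_of_piecewise (d := -1) hμ (sub_nonneg.2 hxa)
    (sub_le_sub_right hab x) (f := fun z => compensatedIncrement μ a b (x, z))
    (fun z hz => by rw [compensatedIncrement_mk hab hx]; grind)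
    (fun z hz => by rw [compensatedIncrement_mk hab hx]; grind)
    (fun z hz => by rw [compensatedIncrement_mk hab hx]; grind)
  rw [h]
  norm_num

lemma hasDerivAt_exp_neg_mul_sub_div (hμ : μ ≠ 0) (t x : ℝ) :
    HasDerivAt (fun x => exp (-μ * (t - x)) / μ) (exp (-μ * (t - x))) x := by
  have hlin : HasDerivAt (fun x => -μ * (t - x)) μ x := by
    simpa using ((hasDerivAt_id x).const_sub t).const_mul (-μ)
  exact (hlin.exp.div_const μ).congr_deriv (by field_simp)

lemma integral_integral_sq_compensatedIncrement (hμ : 0 < μ) (ha : 0 ≤ a) (hab : a ≤ b) :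
    ∫ x in Ici 0, ∫ z in Ici 0, compensatedIncrement μ a b (x, z) ^ 2 * (μ * exp (-μ * z))
      = 2 * (b - a) - (exp (-μ * a) - exp (-μ * b)) / μ := by
  set G := fun x => ∫ z in Ici 0, compensatedIncrement μ a b (x, z) ^ 2 * (μ * exp (-μ * z))
  have hG₀ : EqOn G (fun x => exp (-μ * (a - x)) - exp (-μ * (b - x))) (Ioo 0 a) :=
    fun x hx => integral_sq_compensatedIncrement_of_le hμ hab hx.1.le hx.2.le
  have hG₁ : EqOn G (fun x => 2 - exp (-μ * (b - x))) (Ioo a b) :=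
    fun x hx => integral_sq_compensatedIncrement_of_mem_Ioc hμ (ha.trans hx.1.le) hx.1 hx.2.le
  have hG₂ : EqOn G 0 (Ioi b) :=
    fun x hx => integral_sq_compensatedIncrement_of_lt hab (ha.trans (hab.trans hx.le)) hx
  have hG₂_int : IntegrableOn G (Ioi b) := integrableOn_zero.congr_fun hG₂.symm measurableSet_Ioi
  have hg₀ : IntervalIntegrable (fun x => exp (-μ * (a - x)) - exp (-μ * (b - x))) volume 0 a :=
    (by fun_prop : Continuous _).intervalIntegrable 0 a
  have hg₁ : IntervalIntegrable (fun x => 2 - exp (-μ * (b - x))) volume a b :=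
    (by fun_prop : Continuous _).intervalIntegrable a b
  rw [integral_Ici_eq_integral_Ioi,
    integral_Ioi_eq_of_eqOn_Ioo ha hG₀ hg₀ (integrableOn_Ioi_of_eqOn_Ioo hab hG₁ hg₁ hG₂_int),
    integral_Ioi_eq_of_eqOn_Ioo hab hG₁ hg₁ hG₂_int, setIntegral_congr_fun measurableSet_Ioi hG₂,
    intervalIntegral.integral_eq_sub_of_hasDerivAt (fun x _ =>
      (hasDerivAt_exp_neg_mul_sub_div hμ.ne' a x).sub (hasDerivAt_exp_neg_mul_sub_div hμ.ne' b x))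
      hg₀,
    intervalIntegral.integral_eq_sub_of_hasDerivAt (fun x _ =>
      (hasDerivAt_mul_const 2).sub (hasDerivAt_exp_neg_mul_sub_div hμ.ne' b x)) hg₁]
  simp only [Pi.sub_apply, sub_self, mul_zero, exp_zero, sub_zero, Pi.zero_apply, integral_zero,
    add_zero]
  ring

end CompensatedIncrement

theorem stmt12_general (lam mu T : ℝ) (hmu : 0 < mu) (hT : 0 < T)
    (n : ℕ) (i : ℕ) :
    ∫ x in Set.Ici (0:ℝ), ∫ z in Set.Ici (0:ℝ),
      (uSharp T mu n i (x, z)) ^ 2 * (lam * n * mu * Real.exp (-mu * z))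
      = ((n : ℝ) / T) *
          (gammaFun lam mu (((i : ℝ) + 1) * T / n) - gammaFun lam mu ((i : ℝ) * T / n)) := by
  have ha : 0 ≤ (i : ℝ) * T / n := by positivity
  have hab : (i : ℝ) * T / n ≤ ((i : ℝ) + 1) * T / n := by gcongr; linarith
  have hintegrand : ∀ x z, uSharp T mu n i (x, z) ^ 2 * (lam * n * mu * exp (-mu * z))
      = lam * n / T * (compensatedIncrement mu (i * T / n) ((i + 1) * T / n) (x, z) ^ 2
        * (mu * exp (-mu * z))) := by
    intro x z
    rw [uSharp, ← compensatedIncrement, mul_pow, div_pow, one_pow, sq_sqrt hT.le]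
    ring
  simp_rw [hintegrand, integral_const_mul, integral_integral_sq_compensatedIncrement hmu ha hab,
    gammaFun]
  field_simp
  ring

/-- `∫∫ u_i² dν_n = (n/T)(γ((i+1)T/n) - γ(iT/n))`, where
`dν_n(x,z) = λn dx ⊗ μ e^{-μz} dz` on `[0,∞)²`. -/
theorem stmt12 (lam mu T : ℝ) (hlam : 0 < lam) (hmu : 0 < mu) (hT : 0 < T)
    (n : ℕ) (hn : 0 < n) (i : ℕ) (hi : i ≤ n - 1) :
    ∫ x in Set.Ici (0:ℝ), ∫ z in Set.Ici (0:ℝ),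
      (uSharp T mu n i (x, z)) ^ 2 * (lam * n * mu * Real.exp (-mu * z))
      = ((n : ℝ) / T) *
          (gammaFun lam mu (((i : ℝ) + 1) * T / n) - gammaFun lam mu ((i : ℝ) * T / n)) :=
  stmt12_general lam mu T hmu hT n i
end
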